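/- arXiv:1907.05875 — 3 statements merged into one kernel-verified Lean document; each statement's English description precedes it below -/
import Mathlib

section
/- For every n ∈ ℕ and every p > 0 there exist constants C, K > 0 with the following property: for every Lebesgue-measurable set S ⊆ [0,1]^n of Lebesgue measure greater than p, every d ∈ ℕ, and every homogeneous polynomial h of degree d in n variables with complex coefficients satisfying |h(x)| ≤ 1 for all x ∈ S, one has |h(z)| ≤ K C^d ‖z‖_∞^d for all z ∈ ℂ^n, where ‖z‖_∞ = max_i |z_i|. -/
/-!
A univariate polynomial of degree `≤ d` bounded by `M` on a set `E ⊆ [0,1]` of measure `≥ p` is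
bounded by `M e (4e/p)^d` on the unit disc: the cumulative volume `x ↦ |E ∩ (-∞, x]|` is
1-Lipschitz, so its levels `(j+1) p/(d+1)`, `j ≤ d`, are first reached at `d+1` points of the
closure of `E` with mutual gaps `≥ p/(d+1)`, and Lagrange interpolation at these nodes gives the
bound.

By Fubini, the first coordinates `r` over which the slice of `S` has measure `> p/2` form a set
of measure `> p/2`. Induction on `n` bounds `h` by `K C^d` on the unit cube over each such `r`,
and the inequality above, in the first variable, extends this to the whole cube. Applying it with
`E = [0,1]` one coordinate at a time extends the bound to the unit polydisc, and homogeneity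
scales it to `‖z‖^d`.
-/

open MeasureTheory

open scoped Polynomial Nat

section Lagrange

open Finset Polynomial

theorem prod_erase_range_abs_sub (d j : ℕ) (hj : j ≤ d) :
    ∏ k ∈ (range (d + 1)).erase j, |(j : ℝ) - k| = j ! * (d - j)! := by
  have hsplit : (range (d + 1)).erase j = range j ∪ Ico (j + 1) (d + 1) := by
    ext k; simp only [mem_erase, mem_range, mem_union, mem_Ico]; omega
  have hdisj : Disjoint (range j) (Ico (j + 1) (d + 1)) := by
    simp only [disjoint_left, mem_range, mem_Ico]; omega
  have hbelow : ∏ k ∈ range j, |(j : ℝ) - k| = j ! := by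
    rw [← prod_range_reflect, ← prod_range_add_one_eq_factorial, Nat.cast_prod]
    refine prod_congr rfl fun k hk => ?_
    rw [mem_range] at hk
    rw [abs_of_nonneg (by rw [sub_nonneg]; exact_mod_cast (by omega : j - 1 - k ≤ j)),
      Nat.cast_sub (by omega), Nat.cast_sub (by omega)]
    push_cast; ring
  have habove : ∏ k ∈ Ico (j + 1) (d + 1), |(j : ℝ) - k| = (d - j)! := by
    rw [prod_Ico_eq_prod_range, ← prod_range_add_one_eq_factorial, Nat.cast_prod,
      show d + 1 - (j + 1) = d - j by omega]
    refine prod_congr rfl fun k _ => ?_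
    rw [abs_sub_comm, abs_of_nonneg (by push_cast; linarith)]
    push_cast; ring
  rw [hsplit, prod_union hdisj, hbelow, habove]

theorem sum_range_inv_factorial_mul_factorial (d : ℕ) :
    ∑ j ∈ range (d + 1), ((j ! : ℝ) * (d - j)!)⁻¹ = 2 ^ d / d ! := by
  have hterm : ∀ j ∈ range (d + 1), ((j ! : ℝ) * (d - j)!)⁻¹ = d.choose j / d ! := by
    intro j hj
    have hfac := Nat.choose_mul_factorial_mul_factorial (Nat.lt_succ_iff.mp (mem_range.mp hj))
    rw [eq_div_iff (by positivity), ← hfac]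
    push_cast
    field_simp
  rw [sum_congr rfl hterm, ← sum_div, ← Nat.cast_sum, Nat.sum_range_choose]
  push_cast; rfl

theorem norm_eval_basis_le {d : ℕ} {c : ℝ} (hc : 0 < c) {v : ℕ → ℂ}
    (hv : ∀ k ≤ d, ‖v k‖ ≤ 1) (hsep : ∀ j ≤ d, ∀ k ≤ d, c * |(j : ℝ) - k| ≤ ‖v j - v k‖)
    {j : ℕ} (hj : j ≤ d) {w : ℂ} (hw : ‖w‖ ≤ 1) :
    ‖(Lagrange.basis (range (d + 1)) v j).eval w‖ ≤ 2 ^ d / (c ^ d * (j ! * (d - j)!)) := by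
  have hfactor : ∀ k ∈ (range (d + 1)).erase j,
      ‖(Lagrange.basisDivisor (v j) (v k)).eval w‖ ≤ 2 / (c * |(j : ℝ) - k|) := by
    intro k hk
    obtain ⟨hkj, hk⟩ := mem_erase.mp hk
    have hk : k ≤ d := Nat.lt_succ_iff.mp (mem_range.mp hk)
    have hpos : 0 < c * |(j : ℝ) - k| :=
      mul_pos hc (abs_pos.mpr (sub_ne_zero.mpr (by exact_mod_cast Ne.symm hkj)))
    have hnum : ‖w - v k‖ ≤ 2 := (norm_sub_le _ _).trans (by linarith [hv k hk])
    rw [Lagrange.basisDivisor, eval_mul, eval_C, eval_sub, eval_X, eval_C, norm_mul, norm_inv,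
      ← div_eq_inv_mul]
    exact div_le_div₀ zero_le_two hnum hpos (hsep j hj k hk)
  have hcard : #((range (d + 1)).erase j) = d := by
    rw [card_erase_of_mem (mem_range.mpr (by omega)), card_range, Nat.add_sub_cancel]
  rw [Lagrange.basis, eval_prod, norm_prod]
  calc ∏ k ∈ (range (d + 1)).erase j, ‖(Lagrange.basisDivisor (v j) (v k)).eval w‖
      ≤ ∏ k ∈ (range (d + 1)).erase j, 2 / (c * |(j : ℝ) - k|) :=
        prod_le_prod (fun _ _ => norm_nonneg _) hfactor
    _ = 2 ^ d / (c ^ d * (j ! * (d - j)!)) := by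
        rw [prod_div_distrib, prod_mul_distrib, prod_const, prod_const, hcard,
          prod_erase_range_abs_sub d j hj]

theorem norm_eval_le_of_separated_nodes {d : ℕ} {c M : ℝ} (hc : 0 < c) {v : ℕ → ℂ}
    (hv : ∀ k ≤ d, ‖v k‖ ≤ 1) (hsep : ∀ j ≤ d, ∀ k ≤ d, c * |(j : ℝ) - k| ≤ ‖v j - v k‖)
    {q : ℂ[X]} (hq : q.natDegree ≤ d) (hqv : ∀ j ≤ d, ‖q.eval (v j)‖ ≤ M)
    {w : ℂ} (hw : ‖w‖ ≤ 1) :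
    ‖q.eval w‖ ≤ M * (4 ^ d / (c ^ d * d !)) := by
  have hM : 0 ≤ M := (norm_nonneg _).trans (hqv 0 d.zero_le)
  have hinj : Set.InjOn v (range (d + 1)) := by
    intro j hj k hk hjk
    have hj := Nat.lt_succ_iff.mp (mem_range.mp hj)
    have hk := Nat.lt_succ_iff.mp (mem_range.mp hk)
    have hle : c * |(j : ℝ) - k| ≤ 0 := by simpa [hjk] using hsep j hj k hk
    exact_mod_cast sub_eq_zero.mp
      (abs_nonpos_iff.mp (nonpos_of_mul_nonpos_right hle hc))
  have hdeg : q.degree < #(range (d + 1)) := by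
    rw [card_range]
    exact (degree_le_of_natDegree_le hq).trans_lt (WithBot.coe_lt_coe.mpr d.lt_succ_self)
  calc ‖q.eval w‖
      = ‖∑ j ∈ range (d + 1), q.eval (v j) * (Lagrange.basis (range (d + 1)) v j).eval w‖ := by
        conv_lhs => rw [Lagrange.eq_interpolate hinj hdeg, Lagrange.interpolate_apply]
        simp only [eval_finsetSum, eval_mul, eval_C]
    _ ≤ ∑ j ∈ range (d + 1), M * (2 ^ d / (c ^ d * (j ! * (d - j)!))) := by
        refine (norm_sum_le _ _).trans (sum_le_sum fun j hj => ?_)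
        have hj := Nat.lt_succ_iff.mp (mem_range.mp hj)
        rw [norm_mul]
        exact mul_le_mul (hqv j hj) (norm_eval_basis_le hc hv hsep hj hw) (norm_nonneg _) hM
    _ = M * (2 ^ d / c ^ d) * ∑ j ∈ range (d + 1), ((j ! : ℝ) * (d - j)!)⁻¹ := by
        rw [mul_sum]
        refine sum_congr rfl fun j _ => ?_
        field_simp
    _ = M * (4 ^ d / (c ^ d * d !)) := by
        rw [sum_range_inv_factorial_mul_factorial, show (4 : ℝ) ^ d = 2 ^ d * 2 ^ d by
          rw [← mul_pow]; norm_num]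
        field_simp

end Lagrange

open Set Filter Topology

noncomputable def cumulativeVolume (E : Set ℝ) (x : ℝ) : ℝ := (volume (E ∩ Iic x)).toReal

section cumulativeVolume

variable {E : Set ℝ}

theorem volume_inter_ne_top_of_subset_Icc (hE : E ⊆ Icc 0 1) (A : Set ℝ) :
    volume (E ∩ A) ≠ ⊤ :=
  ne_top_of_le_ne_top (by simp) (measure_mono (inter_subset_left.trans hE) :
    volume (E ∩ A) ≤ volume (Icc (0 : ℝ) 1))

theorem cumulativeVolume_mono (hE : E ⊆ Icc 0 1) : Monotone (cumulativeVolume E) :=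
  fun _ _ hxy => ENNReal.toReal_mono (volume_inter_ne_top_of_subset_Icc hE _)
    (measure_mono (inter_subset_inter_right _ (Iic_subset_Iic.mpr hxy)))

theorem cumulativeVolume_le_add (hE : E ⊆ Icc 0 1) {x y : ℝ} :
    cumulativeVolume E y ≤ cumulativeVolume E x + (volume (E ∩ Ioc x y)).toReal := by
  have hsub : E ∩ Iic y ⊆ (E ∩ Iic x) ∪ (E ∩ Ioc x y) := by
    rintro z ⟨hzE, hzy⟩
    rcases le_or_gt z x with hzx | hxz
    exacts [Or.inl ⟨hzE, hzx⟩, Or.inr ⟨hzE, hxz, hzy⟩]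
  rw [cumulativeVolume, cumulativeVolume, ← ENNReal.toReal_add
    (volume_inter_ne_top_of_subset_Icc hE _) (volume_inter_ne_top_of_subset_Icc hE _)]
  exact ENNReal.toReal_mono (ENNReal.add_ne_top.mpr ⟨volume_inter_ne_top_of_subset_Icc hE _,
    volume_inter_ne_top_of_subset_Icc hE _⟩) ((measure_mono hsub).trans (measure_union_le _ _))

theorem lipschitzWith_one_cumulativeVolume (hE : E ⊆ Icc 0 1) :
    LipschitzWith 1 (cumulativeVolume E) := by
  refine LipschitzWith.of_le_add fun x y => ?_
  rcases le_total x y with hxy | hyx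
  · linarith [cumulativeVolume_mono hE hxy, dist_nonneg (x := x) (y := y)]
  · have hIoc : (volume (E ∩ Ioc y x)).toReal ≤ x - y := by
      calc (volume (E ∩ Ioc y x)).toReal ≤ (volume (Ioc y x)).toReal :=
            ENNReal.toReal_mono (by simp) (measure_mono inter_subset_right)
        _ = x - y := by rw [Real.volume_Ioc, ENNReal.toReal_ofReal (by linarith)]
    linarith [cumulativeVolume_le_add hE (x := y) (y := x), Real.dist_eq x y, le_abs_self (x - y)]

theorem cumulativeVolume_eq_zero_of_neg (hE : E ⊆ Icc 0 1) {x : ℝ} (hx : x < 0) :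
    cumulativeVolume E x = 0 := by
  have hempty : E ∩ Iic x = ∅ :=
    eq_empty_of_forall_notMem fun z hz => by linarith [(hE hz.1).1, mem_Iic.mp hz.2]
  simp [cumulativeVolume, hempty]

theorem cumulativeVolume_one (hE : E ⊆ Icc 0 1) : cumulativeVolume E 1 = (volume E).toReal := by
  rw [cumulativeVolume, (inter_eq_left.mpr fun z hz => (hE hz).2 : E ∩ Iic 1 = E)]

end cumulativeVolume

theorem Continuous.apply_sInf_setOf_le_eq {F : ℝ → ℝ} (hF : Continuous F) {y : ℝ}
    (hne : {x | y ≤ F x}.Nonempty) (hbdd : BddBelow {x | y ≤ F x}) :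
    F (sInf {x | y ≤ F x}) = y := by
  set t := sInf {x | y ≤ F x}
  have hleft : Tendsto F (𝓝[<] t) (𝓝 (F t)) := hF.continuousAt.tendsto.mono_left nhdsWithin_le_nhds
  refine le_antisymm (le_of_tendsto hleft (eventually_nhdsWithin_of_forall fun x hx => ?_))
    ((isClosed_le continuous_const hF).csInf_mem hne hbdd)
  exact (not_le.mp (notMem_of_lt_csInf (s := {x | y ≤ F x}) hx hbdd)).le

theorem exists_separated_nodes_in_closure {E : Set ℝ} (hE : E ⊆ Icc 0 1) {c : ℝ} (hc : 0 < c)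
    {d : ℕ} (hvol : ENNReal.ofReal ((d + 1) * c) ≤ volume E) :
    ∃ t : ℕ → ℝ, (∀ j ≤ d, t j ∈ closure E) ∧
      ∀ j ≤ d, ∀ k ≤ d, c * |(j : ℝ) - k| ≤ |t j - t k| := by
  set L : ℕ → Set ℝ := fun j => {x | (j + 1) * c ≤ cumulativeVolume E x}
  have hF1 : (d + 1) * c ≤ cumulativeVolume E 1 := by
    rw [cumulativeVolume_one hE]
    exact (ENNReal.ofReal_le_iff_le_toReal
      (by simpa using volume_inter_ne_top_of_subset_Icc hE univ)).mp hvol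
  have hbdd : ∀ j, BddBelow (L j) := fun j => ⟨0, fun x hx => not_lt.mp fun hneg => by
    have hx : (j + 1) * c ≤ cumulativeVolume E x := hx
    rw [cumulativeVolume_eq_zero_of_neg hE hneg] at hx
    linarith [show 0 < ((j : ℝ) + 1) * c by positivity]⟩
  have hFt : ∀ j ≤ d, cumulativeVolume E (sInf (L j)) = (j + 1) * c := fun j hj =>
    (lipschitzWith_one_cumulativeVolume hE).continuous.apply_sInf_setOf_le_eq
      ⟨1, le_trans (by gcongr) hF1⟩ (hbdd j)
  refine ⟨fun j => sInf (L j), fun j hj => Metric.mem_closure_iff.mpr fun ε hε => ?_,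
    fun j hj k hk => ?_⟩
  · set t := sInf (L j)
    have hlt : cumulativeVolume E (t - ε) < cumulativeVolume E t := by
      rw [hFt j hj]
      exact not_le.mp (notMem_of_lt_csInf (s := L j) (by linarith) (hbdd j))
    have hpos : 0 < (volume (E ∩ Ioc (t - ε) t)).toReal := by
      linarith [cumulativeVolume_le_add hE (x := t - ε) (y := t)]
    obtain ⟨b, hbE, hb⟩ := nonempty_of_measure_ne_zero (ENNReal.toReal_pos_iff.mp hpos).1.ne'
    exact ⟨b, hbE, by rw [Real.dist_eq, abs_lt]; constructor <;> linarith [hb.1, hb.2]⟩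
  · have hdist := (lipschitzWith_one_cumulativeVolume hE).dist_le_mul (sInf (L j)) (sInf (L k))
    rw [hFt j hj, hFt k hk, NNReal.coe_one, one_mul, Real.dist_eq, Real.dist_eq,
      show ((j : ℝ) + 1) * c - (k + 1) * c = c * (j - k) by ring, abs_mul, abs_of_pos hc]
      at hdist
    exact hdist

theorem add_one_pow_div_factorial_le_exp_one_pow (d : ℕ) :
    ((d : ℝ) + 1) ^ d / d ! ≤ Real.exp 1 ^ (d + 1) := by
  have h := Real.pow_div_factorial_le_exp ((d : ℝ) + 1) (by positivity) (d + 1)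
  rw [Nat.factorial_succ, Nat.cast_mul, pow_succ, Nat.cast_succ, mul_comm ((d : ℝ) + 1) _,
    mul_div_mul_right _ _ (by positivity : ((d : ℝ) + 1) ≠ 0)] at h
  rwa [Real.exp_one_pow, Nat.cast_succ]

theorem Complex.norm_ofReal_le_one_of_mem_Icc {x : ℝ} (hx : x ∈ Icc 0 1) : ‖(x : ℂ)‖ ≤ 1 := by
  rw [Complex.norm_real, Real.norm_of_nonneg hx.1]
  exact hx.2

theorem norm_eval_le_of_norm_eval_le_on {p : ℝ} (hp : 0 < p) {E : Set ℝ} (hE : E ⊆ Icc 0 1)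
    (hvol : ENNReal.ofReal p ≤ volume E) {d : ℕ} {q : ℂ[X]} (hq : q.natDegree ≤ d) {M : ℝ}
    (hM : ∀ x ∈ E, ‖q.eval (x : ℂ)‖ ≤ M) {w : ℂ} (hw : ‖w‖ ≤ 1) :
    ‖q.eval w‖ ≤ M * (Real.exp 1 * (4 * Real.exp 1 / p) ^ d) := by
  set c := p / (d + 1)
  have hc : 0 < c := by positivity
  have hdc : ((d : ℝ) + 1) * c = p := mul_div_cancel₀ p (by positivity)
  clear_value c
  obtain ⟨t, htE, hsep⟩ := exists_separated_nodes_in_closure hE hc (hdc ▸ hvol)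
  have hMclosure : ∀ x ∈ closure E, ‖q.eval (x : ℂ)‖ ≤ M :=
    closure_minimal hM
      (isClosed_le (q.continuous.comp Complex.continuous_ofReal).norm continuous_const)
  have hbound := norm_eval_le_of_separated_nodes (v := fun j => (t j : ℂ)) hc
    (fun k hk => Complex.norm_ofReal_le_one_of_mem_Icc (closure_minimal hE isClosed_Icc (htE k hk)))
    (fun j hj k hk => by
      rw [← Complex.ofReal_sub, Complex.norm_real, Real.norm_eq_abs]
      exact hsep j hj k hk)
    hq (fun j hj => hMclosure _ (htE j hj)) hw
  have hM0 : 0 ≤ M := (norm_nonneg _).trans (hMclosure _ (htE 0 d.zero_le))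
  refine hbound.trans (mul_le_mul_of_nonneg_left ?_ hM0)
  calc (4 : ℝ) ^ d / (c ^ d * d !) = (4 / p) ^ d * (((d : ℝ) + 1) ^ d / d !) := by
        rw [← hdc, div_pow, mul_pow]; field_simp
    _ ≤ (4 / p) ^ d * Real.exp 1 ^ (d + 1) := by
        gcongr; exact add_one_pow_div_factorial_le_exp_one_pow d
    _ = Real.exp 1 * (4 * Real.exp 1 / p) ^ d := by ring

def IsSeparatelyPolynomial {ι 𝕜 : Type*} [DecidableEq ι] [CommSemiring 𝕜] [Algebra 𝕜 ℂ]
    (d : ℕ) (f : (ι → 𝕜) → ℂ) : Prop :=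
  ∀ (x : ι → 𝕜) (i : ι), ∃ q : ℂ[X], q.natDegree ≤ d ∧
    ∀ t : 𝕜, q.eval (algebraMap 𝕜 ℂ t) = f (Function.update x i t)

theorem IsSeparatelyPolynomial.comp_cons {𝕜 : Type*} [CommSemiring 𝕜] [Algebra 𝕜 ℂ] {n d : ℕ}
    {f : (Fin (n + 1) → 𝕜) → ℂ} (hf : IsSeparatelyPolynomial d f) (r : 𝕜) :
    IsSeparatelyPolynomial d fun y : Fin n → 𝕜 => f (Fin.cons r y) := by
  intro y i
  obtain ⟨q, hq, hqf⟩ := hf (Fin.cons r y) i.succ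
  exact ⟨q, hq, fun t => by rw [hqf, ← Fin.cons_update]⟩

theorem MvPolynomial.natDegree_aeval_le_totalDegree {σ R : Type*} [CommSemiring R]
    (h : MvPolynomial σ R) {s : σ → R[X]} (hs : ∀ i, (s i).natDegree ≤ 1) :
    (MvPolynomial.aeval s h).natDegree ≤ h.totalDegree := by
  rw [MvPolynomial.aeval_def, MvPolynomial.eval₂_eq]
  refine Polynomial.natDegree_sum_le_of_forall_le _ _ fun m hm => ?_
  calc _ ≤ (∏ i ∈ m.support, s i ^ m i).natDegree := Polynomial.natDegree_C_mul_le _ _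
    _ ≤ ∑ i ∈ m.support, (s i ^ m i).natDegree := Polynomial.natDegree_prod_le _ _
    _ ≤ ∑ i ∈ m.support, m i := Finset.sum_le_sum fun i _ =>
        Polynomial.natDegree_pow_le.trans (by simpa using Nat.mul_le_mul_left (m i) (hs i))
    _ ≤ h.totalDegree := MvPolynomial.le_totalDegree hm

theorem MvPolynomial.isSeparatelyPolynomial_eval {ι 𝕜 : Type*} [DecidableEq ι] [CommSemiring 𝕜]
    [Algebra 𝕜 ℂ] {h : MvPolynomial ι ℂ} {d : ℕ} (hd : h.totalDegree ≤ d) :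
    IsSeparatelyPolynomial d fun x : ι → 𝕜 =>
      MvPolynomial.eval (fun i => algebraMap 𝕜 ℂ (x i)) h := by
  intro x i
  set s := Function.update (fun j => Polynomial.C (algebraMap 𝕜 ℂ (x j))) i Polynomial.X
  refine ⟨MvPolynomial.aeval s h, (h.natDegree_aeval_le_totalDegree fun j => ?_).trans hd,
    fun t => ?_⟩
  · rcases eq_or_ne j i with rfl | hj
    · simp [s]
    · simp [s, hj]
  · rw [MvPolynomial.aeval_def, MvPolynomial.polynomial_eval_eval₂]
    have hcoeff : (Polynomial.evalRingHom (algebraMap 𝕜 ℂ t)).comp (algebraMap ℂ ℂ[X]) =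
        RingHom.id ℂ := by ext; simp
    have hpoint : (fun j => (s j).eval (algebraMap 𝕜 ℂ t)) =
        fun j => algebraMap 𝕜 ℂ (Function.update x i t j) := by
      ext j
      rcases eq_or_ne j i with rfl | hj
      · simp [s]
      · simp [s, hj]
    rw [hcoeff, hpoint, MvPolynomial.eval₂_id]

section Slices

variable {α : Type*} {n : ℕ}

def firstSlice (S : Set (Fin (n + 1) → α)) (r : α) : Set (Fin n → α) := {y | Fin.cons r y ∈ S}

theorem firstSlice_subset_pi {S : Set (Fin (n + 1) → α)} {s : Set α}
    (hS : S ⊆ univ.pi fun _ => s) (r : α) : firstSlice S r ⊆ univ.pi fun _ => s :=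
  fun y hy i _ => by simpa using hS hy i.succ (mem_univ _)

theorem mem_of_firstSlice_nonempty {S : Set (Fin (n + 1) → α)} {s : Set α}
    (hS : S ⊆ univ.pi fun _ => s) {r : α} (hr : (firstSlice S r).Nonempty) : r ∈ s := by
  obtain ⟨y, hy⟩ := hr
  simpa using hS hy 0 (mem_univ _)

section Measurable

variable [MeasurableSpace α] {S : Set (Fin (n + 1) → α)}

theorem firstSlice_eq_preimage (r : α) :
    firstSlice S r =
      Prod.mk r ⁻¹' ((MeasurableEquiv.piFinSuccAbove (fun _ => α) 0).symm ⁻¹' S) := by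
  ext y
  simp [firstSlice, MeasurableEquiv.piFinSuccAbove_symm_apply, Fin.insertNthEquiv,
    Fin.insertNth_zero']

theorem measurableSet_firstSlice (hS : MeasurableSet S) (r : α) :
    MeasurableSet (firstSlice S r) := by
  rw [firstSlice_eq_preimage]
  exact measurable_prodMk_left ((MeasurableEquiv.piFinSuccAbove _ 0).symm.measurable hS)

end Measurable

variable [MeasureSpace α] [SigmaFinite (volume : Measure α)] {S : Set (Fin (n + 1) → α)}

theorem lintegral_volume_firstSlice (hS : MeasurableSet S) :
    ∫⁻ r, volume (firstSlice S r) = volume S := by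
  have hpres := (volume_preserving_piFinSuccAbove (fun _ : Fin (n + 1) => α) 0).symm
  rw [← hpres.measure_preimage hS.nullMeasurableSet, Measure.volume_eq_prod,
    Measure.prod_apply ((MeasurableEquiv.piFinSuccAbove _ 0).symm.measurable hS)]
  simp_rw [firstSlice_eq_preimage]

end Slices

theorem lintegral_le_measure_setOf_lt_add {α : Type*} [MeasurableSpace α] {μ : Measure α}
    {f : α → ENNReal} {T : Set α} (hT : MeasurableSet T) (hf : ∀ x, f x ≤ 1)
    (hfT : ∀ x ∉ T, f x = 0) (a : ENNReal) :
    ∫⁻ x, f x ∂μ ≤ μ {x | a < f x} + a * μ T := by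
  have hpoint : ∀ x, f x ≤ {x | a < f x}.indicator (fun _ => 1) x + T.indicator (fun _ => a) x := by
    intro x
    by_cases hx : a < f x
    · simpa [hx] using le_add_right (hf x)
    by_cases hxT : x ∈ T
    · simpa [hx, hxT] using not_lt.mp hx
    · simp [hfT x hxT]
  calc ∫⁻ x, f x ∂μ
      ≤ ∫⁻ x, ({x | a < f x}.indicator (fun _ => 1) x + T.indicator (fun _ => a) x) ∂μ :=
        lintegral_mono hpoint
    _ ≤ μ {x | a < f x} + a * μ T := by
        rw [lintegral_add_right _ (measurable_const.indicator hT), lintegral_indicator_const hT]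
        gcongr
        simpa using lintegral_indicator_const_le {x | a < f x} (1 : ENNReal)

theorem volume_le_volume_setOf_lt_volume_firstSlice_add {n : ℕ} {S : Set (Fin (n + 1) → ℝ)}
    (hS : MeasurableSet S) (hScube : S ⊆ univ.pi fun _ => Icc 0 1) (a : ENNReal) :
    volume S ≤ volume {r | a < volume (firstSlice S r)} + a := by
  rw [← lintegral_volume_firstSlice hS]
  refine (lintegral_le_measure_setOf_lt_add (T := Icc 0 1) measurableSet_Icc (fun r => ?_)
    (fun r hr => ?_) a).trans_eq (by simp)
  · calc volume (firstSlice S r) ≤ volume (univ.pi fun _ : Fin n => Icc (0 : ℝ) 1) :=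
          measure_mono (firstSlice_subset_pi hScube r)
      _ = 1 := by simp [Real.volume_Icc_pi]
  · by_contra hne
    exact hr (mem_of_firstSlice_nonempty hScube (nonempty_of_measure_ne_zero hne))

theorem exists_norm_le_on_cube_of_norm_le_one_on (n : ℕ) {p : ℝ} (hp : 0 < p) :
    ∃ K C : ℝ, 0 < K ∧ 0 < C ∧ ∀ (d : ℕ) (f : (Fin n → ℝ) → ℂ), IsSeparatelyPolynomial d f →
      ∀ S : Set (Fin n → ℝ), MeasurableSet S → S ⊆ univ.pi (fun _ => Icc 0 1) →
      ENNReal.ofReal p < volume S → (∀ x ∈ S, ‖f x‖ ≤ 1) →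
      ∀ x ∈ univ.pi (fun _ => Icc (0 : ℝ) 1), ‖f x‖ ≤ K * C ^ d := by
  induction n generalizing p with
  | zero =>
    refine ⟨1, 1, one_pos, one_pos, fun d f _ S _ _ hvol hfS x _ => ?_⟩
    obtain ⟨y, hy⟩ := nonempty_of_measure_ne_zero (ne_bot_of_gt hvol)
    rw [Subsingleton.elim x y, one_pow, one_mul]
    exact hfS y hy
  | succ n ih =>
    obtain ⟨K, C, hK, hC, hKC⟩ := ih (half_pos hp)
    refine ⟨K * Real.exp 1, C * (4 * Real.exp 1 / (p / 2)), by positivity, by positivity, ?_⟩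
    intro d f hf S hS hScube hvol hfS x hx
    set G := {r | ENNReal.ofReal (p / 2) < volume (firstSlice S r)}
    have hGvol : ENNReal.ofReal (p / 2) < volume G := by
      refine (ENNReal.add_lt_add_iff_right (ENNReal.ofReal_ne_top (r := p / 2))).mp ?_
      calc ENNReal.ofReal (p / 2) + ENNReal.ofReal (p / 2) = ENNReal.ofReal p := by
            rw [← ENNReal.ofReal_add (by positivity) (by positivity), add_halves]
        _ < volume S := hvol
        _ ≤ volume G + ENNReal.ofReal (p / 2) :=
            volume_le_volume_setOf_lt_volume_firstSlice_add hS hScube _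
    have hGIcc : G ⊆ Icc 0 1 := fun r hr =>
      mem_of_firstSlice_nonempty hScube (nonempty_of_measure_ne_zero (ne_bot_of_gt hr))
    obtain ⟨q, hq, hqf⟩ := hf x 0
    simp only [Complex.coe_algebraMap] at hqf
    have hqG : ∀ r ∈ G, ‖q.eval (r : ℂ)‖ ≤ K * C ^ d := by
      intro r hr
      rw [hqf, ← Fin.cons_self_tail x, Fin.update_cons_zero]
      exact hKC d _ (hf.comp_cons r) _ (measurableSet_firstSlice hS r)
        (firstSlice_subset_pi hScube r) hr (fun y hy => hfS _ hy) _
        (fun i _ => hx i.succ (mem_univ _))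
    calc ‖f x‖ = ‖q.eval (x 0 : ℂ)‖ := by rw [hqf, Function.update_eq_self]
      _ ≤ K * C ^ d * (Real.exp 1 * (4 * Real.exp 1 / (p / 2)) ^ d) :=
          norm_eval_le_of_norm_eval_le_on (half_pos hp) hGIcc hGvol.le hq hqG
            (Complex.norm_ofReal_le_one_of_mem_Icc (hx 0 (mem_univ _)))
      _ = K * Real.exp 1 * (C * (4 * Real.exp 1 / (p / 2))) ^ d := by ring

theorem IsSeparatelyPolynomial.norm_le_mul_pow_card {ι : Type*} [DecidableEq ι] {d : ℕ}
    {f : (ι → ℂ) → ℂ} (hf : IsSeparatelyPolynomial d f) {M : ℝ}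
    (hM : ∀ x ∈ univ.pi fun _ : ι => Icc (0 : ℝ) 1, ‖f fun i => (x i : ℂ)‖ ≤ M)
    (s : Finset ι) {z : ι → ℂ} (hzs : ∀ i ∈ s, ‖z i‖ ≤ 1)
    (hzr : ∀ i ∉ s, ∃ r ∈ Icc (0 : ℝ) 1, z i = r) :
    ‖f z‖ ≤ M * (Real.exp 1 * (4 * Real.exp 1) ^ d) ^ s.card := by
  induction s using Finset.induction_on generalizing z with
  | empty =>
    choose x hx hxz using fun i => hzr i (Finset.notMem_empty i)
    rw [funext hxz, Finset.card_empty, pow_zero, mul_one]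
    exact hM x fun i _ => hx i
  | @insert i s hi ih =>
    obtain ⟨q, hq, hqf⟩ := hf z i
    simp only [Algebra.algebraMap_self, RingHom.id_apply] at hqf
    have hqIcc : ∀ r ∈ Icc (0 : ℝ) 1,
        ‖q.eval (r : ℂ)‖ ≤ M * (Real.exp 1 * (4 * Real.exp 1) ^ d) ^ s.card := by
      intro r hr
      rw [hqf]
      refine ih (fun j hj => ?_) (fun j hj => ?_)
      · rw [Function.update_of_ne (ne_of_mem_of_not_mem hj hi)]
        exact hzs j (Finset.mem_insert_of_mem hj)
      · rcases eq_or_ne j i with rfl | hji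
        · exact ⟨r, hr, Function.update_self ..⟩
        · rw [Function.update_of_ne hji]
          exact hzr j (by simp [hji, hj])
    calc ‖f z‖ = ‖q.eval (z i)‖ := by rw [hqf, Function.update_eq_self]
      _ ≤ M * (Real.exp 1 * (4 * Real.exp 1) ^ d) ^ s.card *
          (Real.exp 1 * (4 * Real.exp 1 / 1) ^ d) :=
        norm_eval_le_of_norm_eval_le_on one_pos subset_rfl (by simp) hq hqIcc
          (hzs i (Finset.mem_insert_self i s))
      _ = M * (Real.exp 1 * (4 * Real.exp 1) ^ d) ^ (insert i s).card := by
        rw [Finset.card_insert_of_notMem hi, div_one, pow_succ, mul_assoc]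

theorem IsSeparatelyPolynomial.norm_le_of_norm_le_on_cube {ι : Type*} [Fintype ι] [DecidableEq ι]
    {d : ℕ} {f : (ι → ℂ) → ℂ} (hf : IsSeparatelyPolynomial d f) {M : ℝ}
    (hM : ∀ x ∈ univ.pi fun _ : ι => Icc (0 : ℝ) 1, ‖f fun i => (x i : ℂ)‖ ≤ M)
    {z : ι → ℂ} (hz : ‖z‖ ≤ 1) :
    ‖f z‖ ≤ M * (Real.exp 1 * (4 * Real.exp 1) ^ d) ^ Fintype.card ι :=
  hf.norm_le_mul_pow_card hM Finset.univ (fun i _ => (norm_le_pi_norm z i).trans hz)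
    (fun i hi => absurd (Finset.mem_univ i) hi)

theorem MvPolynomial.IsHomogeneous.eval_smul {σ R : Type*} [CommSemiring R]
    {h : MvPolynomial σ R} {d : ℕ} (hh : h.IsHomogeneous d) (c : R) (z : σ → R) :
    MvPolynomial.eval (c • z) h = c ^ d * MvPolynomial.eval z h := by
  rw [MvPolynomial.eval_eq, MvPolynomial.eval_eq, Finset.mul_sum]
  refine Finset.sum_congr rfl fun m hm => ?_
  have hdeg : ∑ i ∈ m.support, m i = d := by
    by_contra hne
    exact MvPolynomial.mem_support_iff.mp hm (hh.coeff_eq_zero hne)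
  simp_rw [Pi.smul_apply, smul_eq_mul, mul_pow, Finset.prod_mul_distrib,
    Finset.prod_pow_eq_pow_sum, hdeg]
  ring

theorem MvPolynomial.IsHomogeneous.norm_eval_le {ι 𝕜 : Type*} [Fintype ι] [RCLike 𝕜]
    {h : MvPolynomial ι 𝕜} {d : ℕ} (hh : h.IsHomogeneous d) {B : ℝ}
    (hB : ∀ u : ι → 𝕜, ‖u‖ ≤ 1 → ‖MvPolynomial.eval u h‖ ≤ B) (z : ι → 𝕜) :
    ‖MvPolynomial.eval z h‖ ≤ B * ‖z‖ ^ d := by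
  set u := (‖z‖ : 𝕜)⁻¹ • z
  have hzu : z = (‖z‖ : 𝕜) • u := by
    rcases eq_or_ne z 0 with rfl | hz
    · simp
    · rw [smul_inv_smul₀ (by simpa using hz)]
  have hu : ‖u‖ ≤ 1 := by
    rw [norm_smul, norm_inv, RCLike.norm_ofReal, abs_norm]
    exact inv_mul_le_one
  calc ‖MvPolynomial.eval z h‖ = ‖MvPolynomial.eval ((‖z‖ : 𝕜) • u) h‖ := by rw [← hzu]
    _ = ‖z‖ ^ d * ‖MvPolynomial.eval u h‖ := by
        rw [hh.eval_smul, norm_mul, norm_pow, RCLike.norm_ofReal, abs_norm]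
    _ ≤ B * ‖z‖ ^ d := by rw [mul_comm]; exact mul_le_mul_of_nonneg_right (hB u hu) (by positivity)

/-- **Quantitative bound for homogeneous polynomials bounded on a set of positive measure**
(Lemma 2.3 of Pascoe's wedge-of-the-edge theorem). For every `n` and `p > 0` there are
constants `C, K > 0` such that every homogeneous polynomial `h` of degree `d` in `n` variables
that is bounded by `1` on a measurable subset `S ⊆ [0,1]^n` of Lebesgue measure greater than `p`
satisfies `|h(z)| ≤ K C^d ‖z‖_∞^d` on all of `ℂ^n`. -/
theorem homogeneous_poly_bound_of_bounded_on_positive_measure (n : ℕ) (p : ℝ) (hp : 0 < p) :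
    ∃ C K : ℝ, 0 < C ∧ 0 < K ∧
      ∀ (S : Set (Fin n → ℝ)), MeasurableSet S →
        S ⊆ Set.univ.pi (fun _ => Set.Icc (0 : ℝ) 1) →
        ENNReal.ofReal p < volume S →
        ∀ (d : ℕ) (h : MvPolynomial (Fin n) ℂ), h.IsHomogeneous d →
          (∀ x ∈ S, ‖MvPolynomial.eval (fun i => (x i : ℂ)) h‖ ≤ 1) →
          ∀ z : Fin n → ℂ, ‖MvPolynomial.eval z h‖ ≤ K * C ^ d * ‖z‖ ^ d := by
  obtain ⟨K, C, hK, hC, hcube⟩ := exists_norm_le_on_cube_of_norm_le_one_on n hp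
  refine ⟨C * (4 * Real.exp 1) ^ n, K * Real.exp 1 ^ n, by positivity, by positivity, ?_⟩
  intro S hS hScube hvol d h hh hSbound z
  have hreal : ∀ x ∈ Set.univ.pi fun _ => Set.Icc (0 : ℝ) 1,
      ‖MvPolynomial.eval (fun i => (x i : ℂ)) h‖ ≤ K * C ^ d :=
    hcube d _ (MvPolynomial.isSeparatelyPolynomial_eval (𝕜 := ℝ) hh.totalDegree_le) S hS hScube
      hvol hSbound
  have hdisc : ∀ u : Fin n → ℂ, ‖u‖ ≤ 1 →
      ‖MvPolynomial.eval u h‖ ≤ K * C ^ d * (Real.exp 1 * (4 * Real.exp 1) ^ d) ^ n := by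
    intro u hu
    simpa using (MvPolynomial.isSeparatelyPolynomial_eval (𝕜 := ℂ) hh.totalDegree_le
      ).norm_le_of_norm_le_on_cube hreal hu
  calc ‖MvPolynomial.eval z h‖
      ≤ K * C ^ d * (Real.exp 1 * (4 * Real.exp 1) ^ d) ^ n * ‖z‖ ^ d := hh.norm_eval_le hdisc z
    _ = K * Real.exp 1 ^ n * (C * (4 * Real.exp 1) ^ n) ^ d * ‖z‖ ^ d := by ring
end

section
/- Let μ be a finite Borel measure on [−1,1], let a ∈ ℝ, and define f(x) = a + ∫_{[−1,1]} x/(1 + t x) dμ(t) for x ∈ (−1,1). If there is M > 0 with |f(x)| ≤ M for all x ∈ (−1,1), then μ([−1,1]) ≤ M. -/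
/-!
Pairing `x` with `-x` kills the constant `a` and symmetrises the kernel:
`x / (1 + t x) + x / (1 - t x) = 2x / (1 - t²x²) ≥ 2x` for `t ∈ [-1, 1]`, so
`2x · μ([-1, 1]) ≤ f(x) - f(-x) ≤ 2M` for `0 < x < 1`; letting `x → 1` gives the bound.
-/

open MeasureTheory Filter Set Topology

lemma abs_mul_lt_one_of_mem_Icc {t x : ℝ} (ht : t ∈ Icc (-1 : ℝ) 1) (hx : |x| < 1) :
    |t * x| < 1 := by
  rw [abs_mul]
  exact lt_of_le_of_lt (mul_le_of_le_one_left (abs_nonneg x) (abs_le.2 ht)) hx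

lemma two_mul_le_div_one_add_add_div_one_sub {t x : ℝ} (hx : 0 ≤ x) (h : |t * x| < 1) :
    2 * x ≤ x / (1 + t * x) + x / (1 - t * x) := by
  obtain ⟨h₁, h₂⟩ := abs_lt.1 h
  have hplus : 0 < 1 + t * x := by linarith
  have hminus : 0 < 1 - t * x := by linarith
  rw [div_add_div _ _ hplus.ne' hminus.ne', le_div_iff₀ (mul_pos hplus hminus)]
  nlinarith [mul_nonneg hx (sq_nonneg (t * x))]

lemma integrableOn_div_one_add_mul_Icc (μ : Measure ℝ) [IsFiniteMeasureOnCompacts μ] {x : ℝ}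
    (hx : |x| < 1) : IntegrableOn (fun t => x / (1 + t * x)) (Icc (-1) 1) μ := by
  refine ContinuousOn.integrableOn_compact isCompact_Icc ?_
  refine continuousOn_const.div (by fun_prop) fun t ht => ?_
  linarith [(abs_lt.1 (abs_mul_lt_one_of_mem_Icc ht hx)).1]

lemma two_mul_measureReal_le_setIntegral_sub (μ : Measure ℝ) [IsFiniteMeasureOnCompacts μ]
    {x : ℝ} (hx₀ : 0 ≤ x) (hx₁ : x < 1) :
    2 * x * μ.real (Icc (-1) 1) ≤
      (∫ t in Icc (-1 : ℝ) 1, x / (1 + t * x) ∂μ) -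
        ∫ t in Icc (-1 : ℝ) 1, -x / (1 + t * -x) ∂μ := by
  have hx : |x| < 1 := abs_lt.2 ⟨by linarith, hx₁⟩
  have hint := integrableOn_div_one_add_mul_Icc μ hx
  have hint' := integrableOn_div_one_add_mul_Icc μ (x := -x) (by rwa [abs_neg])
  rw [← integral_sub hint hint', mul_comm, ← smul_eq_mul, ← setIntegral_const]
  refine setIntegral_mono_on (integrableOn_const measure_Icc_lt_top.ne) (hint.sub hint')
    measurableSet_Icc fun t ht => ?_
  have hsym : x / (1 + t * x) - -x / (1 + t * -x) = x / (1 + t * x) + x / (1 - t * x) := by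
    ring
  simpa only [hsym] using
    two_mul_le_div_one_add_add_div_one_sub hx₀ (abs_mul_lt_one_of_mem_Icc ht hx)

theorem nevanlinna_integral_mass_bound_general (μ : Measure ℝ) [IsFiniteMeasure μ] (a : ℝ)
    (f : ℝ → ℝ) (hf : ∀ x ∈ Set.Ioo (-1 : ℝ) 1,
      f x = a + ∫ t in Set.Icc (-1 : ℝ) 1, x / (1 + t * x) ∂μ)
    (M : ℝ) (hbd : ∀ x ∈ Set.Ioo (-1 : ℝ) 1, |f x| ≤ M) :
    (μ (Set.Icc (-1 : ℝ) 1)).toReal ≤ M := by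
  have hbound : ∀ x ∈ Ioo (0 : ℝ) 1, x * μ.real (Icc (-1) 1) ≤ M := by
    rintro x ⟨hx₀, hx₁⟩
    have hx : x ∈ Ioo (-1 : ℝ) 1 := ⟨by linarith, hx₁⟩
    have hnx : -x ∈ Ioo (-1 : ℝ) 1 := ⟨by linarith, by linarith⟩
    have hsub := two_mul_measureReal_le_setIntegral_sub μ hx₀.le hx₁
    rw [← add_sub_add_left_eq_sub _ _ a, ← hf x hx, ← hf (-x) hnx] at hsub
    linarith [(abs_le.1 (hbd x hx)).2, (abs_le.1 (hbd (-x) hnx)).1]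
  have hlim : Tendsto (fun x : ℝ => x * μ.real (Icc (-1) 1)) (𝓝[<] 1)
      (𝓝 (1 * μ.real (Icc (-1) 1))) :=
    (continuous_id.mul continuous_const).continuousAt.continuousWithinAt.tendsto
  rw [one_mul] at hlim
  exact le_of_tendsto hlim (eventually_of_mem (Ioo_mem_nhdsLT zero_lt_one) hbound)

/-- If `f(x) = a + ∫_{[−1,1]} x/(1+tx) dμ(t)` is bounded by `M` on `(−1,1)`, then the total
mass of `μ` is at most `M`. -/
theorem nevanlinna_integral_mass_bound (μ : Measure ℝ) [IsFiniteMeasure μ] (a : ℝ)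
    (f : ℝ → ℝ) (hf : ∀ x ∈ Set.Ioo (-1 : ℝ) 1,
      f x = a + ∫ t in Set.Icc (-1 : ℝ) 1, x / (1 + t * x) ∂μ)
    (M : ℝ) (hM : 0 < M) (hbd : ∀ x ∈ Set.Ioo (-1 : ℝ) 1, |f x| ≤ M) :
    (μ (Set.Icc (-1 : ℝ) 1)).toReal ≤ M :=
  nevanlinna_integral_mass_bound_general μ a f hf M hbd
end

section
/- Let μ be a finite Borel measure on [−1,1], let a, b ∈ ℝ, and define f(x) = a + b x + ∫_{[−1,1]} x²/(1 + t x) dμ(t) for x ∈ (−1,1). If there is M > 0 with |f(x)| ≤ M for all x ∈ (−1,1), then μ([−1,1]) ≤ 2M and |b| ≤ 6M. -/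
/-!
Write `g(x) = ∫_{[-1,1]} x²/(1+tx) dμ(t)`. Since `f(0) = a`, we get `|a| ≤ M`. The kernel satisfies
`x²/(1+tx) + x²/(1-tx) = 2x²/(1-t²x²) ≥ 2x²`, so `f(x) + f(-x) - 2a = g(x) + g(-x) ≥ 2x² μ([-1,1])`,
whence `x² μ([-1,1]) ≤ 2M` on `(-1,1)` and, letting `x → 1`, `μ([-1,1]) ≤ 2M`. Finally
`b = f(1/2) - f(-1/2) - g(1/2) + g(-1/2)` with `0 ≤ g(±1/2) ≤ μ([-1,1])/2`.
-/

open MeasureTheory Set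

lemma neg_mem_Ioo_neg_one_one {x : ℝ} (hx : x ∈ Ioo (-1 : ℝ) 1) : -x ∈ Ioo (-1 : ℝ) 1 :=
  ⟨neg_lt_neg hx.2, neg_lt.1 hx.1⟩

lemma one_add_mul_pos {t x : ℝ} (ht : t ∈ Icc (-1 : ℝ) 1) (hx : x ∈ Ioo (-1 : ℝ) 1) :
    0 < 1 + t * x := by
  obtain ⟨ht₁, ht₂⟩ := ht
  obtain ⟨hx₁, hx₂⟩ := hx
  -- `2 (1 + t x) = (1 + t)(1 + x) + (1 - t)(1 - x)`
  nlinarith [mul_nonneg (sub_nonneg.2 ht₂) (sub_pos.2 hx₂).le,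
    mul_nonneg (neg_le_iff_add_nonneg'.1 ht₁) (neg_lt_iff_pos_add'.1 hx₁).le]

lemma two_mul_sq_le_sq_div_one_add_mul_add {t x : ℝ} (ht : t ∈ Icc (-1 : ℝ) 1)
    (hx : x ∈ Ioo (-1 : ℝ) 1) :
    2 * x ^ 2 ≤ x ^ 2 / (1 + t * x) + (-x) ^ 2 / (1 + t * -x) := by
  have hpos := one_add_mul_pos ht hx
  have hneg := one_add_mul_pos ht (neg_mem_Ioo_neg_one_one hx)
  rw [div_add_div _ _ hpos.ne' hneg.ne', le_div_iff₀ (mul_pos hpos hneg)]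
  nlinarith [mul_nonneg (sq_nonneg x) (sq_nonneg (t * x))]

lemma sq_div_one_add_mul_le {t x : ℝ} (ht : t ∈ Icc (-1 : ℝ) 1) (hx : x ∈ Ioo (-1 : ℝ) 1) :
    x ^ 2 / (1 + t * x) ≤ x ^ 2 / (1 - |x|) := by
  have hx' : |x| < 1 := abs_lt.2 hx
  have htx : -|x| ≤ t * x :=
    calc -|x| ≤ -(|t| * |x|) := neg_le_neg (mul_le_of_le_one_left (abs_nonneg x) (abs_le.2 ht))
      _ = -|t * x| := by rw [abs_mul]
      _ ≤ t * x := neg_abs_le _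
  gcongr
  linarith

lemma le_of_forall_mem_Ioo_sq_mul_le {c d : ℝ} (h : ∀ x ∈ Ioo (-1 : ℝ) 1, x ^ 2 * c ≤ d) :
    c ≤ d := by
  have hclosed : IsClosed {x : ℝ | x ^ 2 * c ≤ d} := isClosed_le (by fun_prop) continuous_const
  have hone : (1 : ℝ) ∈ closure (Ioo (-1 : ℝ) 1) := by
    rw [closure_Ioo (by norm_num)]
    norm_num
  simpa using hclosed.closure_subset_iff.2 h hone

section Integrals

variable (μ : Measure ℝ) {x : ℝ}

lemma integrableOn_sq_div_one_add_mul [IsFiniteMeasure μ] (hx : x ∈ Ioo (-1 : ℝ) 1) :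
    IntegrableOn (fun t => x ^ 2 / (1 + t * x)) (Icc (-1 : ℝ) 1) μ :=
  ContinuousOn.integrableOn_compact isCompact_Icc <|
    continuousOn_const.div (by fun_prop) fun _ ht => (one_add_mul_pos ht hx).ne'

lemma setIntegral_sq_div_one_add_mul_nonneg (hx : x ∈ Ioo (-1 : ℝ) 1) :
    0 ≤ ∫ t in Icc (-1 : ℝ) 1, x ^ 2 / (1 + t * x) ∂μ :=
  setIntegral_nonneg measurableSet_Icc fun _ ht => by
    have := one_add_mul_pos ht hx
    positivity

lemma setIntegral_sq_div_one_add_mul_le [IsFiniteMeasure μ] (hx : x ∈ Ioo (-1 : ℝ) 1) :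
    ∫ t in Icc (-1 : ℝ) 1, x ^ 2 / (1 + t * x) ∂μ ≤ μ.real (Icc (-1 : ℝ) 1) * (x ^ 2 / (1 - |x|)) := by
  have h := setIntegral_mono_on (integrableOn_sq_div_one_add_mul μ hx)
    (integrableOn_const (by simp)) measurableSet_Icc fun _ ht => sq_div_one_add_mul_le ht hx
  rwa [setIntegral_const, smul_eq_mul] at h

lemma two_mul_sq_mul_measureReal_le_setIntegral_add [IsFiniteMeasure μ]
    (hx : x ∈ Ioo (-1 : ℝ) 1) :
    2 * x ^ 2 * μ.real (Icc (-1 : ℝ) 1) ≤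
      (∫ t in Icc (-1 : ℝ) 1, x ^ 2 / (1 + t * x) ∂μ) +
        ∫ t in Icc (-1 : ℝ) 1, (-x) ^ 2 / (1 + t * -x) ∂μ := by
  have hpos := integrableOn_sq_div_one_add_mul μ hx
  have hneg := integrableOn_sq_div_one_add_mul μ (neg_mem_Ioo_neg_one_one hx)
  have h := setIntegral_mono_on (g := fun t => x ^ 2 / (1 + t * x) + (-x) ^ 2 / (1 + t * -x))
    (integrableOn_const (by simp)) (hpos.add hneg) measurableSet_Icc
    fun _ ht => two_mul_sq_le_sq_div_one_add_mul_add ht hx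
  rwa [setIntegral_const, smul_eq_mul, mul_comm, integral_add hpos hneg] at h

end Integrals

theorem kraus_integral_mass_and_linear_bound_general (μ : Measure ℝ) [IsFiniteMeasure μ] (a b : ℝ)
    (f : ℝ → ℝ) (hf : ∀ x ∈ Set.Ioo (-1 : ℝ) 1,
      f x = a + b * x + ∫ t in Set.Icc (-1 : ℝ) 1, x ^ 2 / (1 + t * x) ∂μ)
    (M : ℝ) (hbd : ∀ x ∈ Set.Ioo (-1 : ℝ) 1, |f x| ≤ M) :
    (μ (Set.Icc (-1 : ℝ) 1)).toReal ≤ 2 * M ∧ |b| ≤ 6 * M := by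
  change μ.real (Icc (-1 : ℝ) 1) ≤ 2 * M ∧ _
  have hbd' : ∀ x ∈ Ioo (-1 : ℝ) 1, -M ≤ f x ∧ f x ≤ M := fun x hx => abs_le.1 (hbd x hx)
  have h0 : (0 : ℝ) ∈ Ioo (-1 : ℝ) 1 := by norm_num
  have ha : |a| ≤ M := by simpa [hf 0 h0] using hbd 0 h0
  have hmass : μ.real (Icc (-1 : ℝ) 1) ≤ 2 * M := le_of_forall_mem_Ioo_sq_mul_le fun x hx => by
    have hx' := neg_mem_Ioo_neg_one_one hx
    have := two_mul_sq_mul_measureReal_le_setIntegral_add μ hx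
    linarith [hf x hx, hf (-x) hx', hbd' x hx, hbd' (-x) hx', abs_le.1 ha]
  have hp : (1 / 2 : ℝ) ∈ Ioo (-1 : ℝ) 1 := by norm_num
  have hn : (-(1 / 2) : ℝ) ∈ Ioo (-1 : ℝ) 1 := by norm_num
  have hp_le := setIntegral_sq_div_one_add_mul_le μ hp
  have hn_le := setIntegral_sq_div_one_add_mul_le μ hn
  rw [show (1 / 2 : ℝ) ^ 2 / (1 - |1 / 2|) = 1 / 2 by norm_num] at hp_le
  rw [show (-(1 / 2) : ℝ) ^ 2 / (1 - |-(1 / 2)|) = 1 / 2 by norm_num] at hn_le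
  have hp_nonneg := setIntegral_sq_div_one_add_mul_nonneg μ hp
  have hn_nonneg := setIntegral_sq_div_one_add_mul_nonneg μ hn
  refine ⟨hmass, abs_le.2 ⟨?_, ?_⟩⟩ <;>
    linarith [hf _ hp, hf _ hn, hbd' _ hp, hbd' _ hn, abs_nonneg a]

/-- If `f(x) = a + bx + ∫_{[−1,1]} x²/(1+tx) dμ(t)` is bounded by `M` on `(−1,1)`, then the
total mass of `μ` is at most `2M` and `|b| ≤ 6M`. -/
theorem kraus_integral_mass_and_linear_bound (μ : Measure ℝ) [IsFiniteMeasure μ] (a b : ℝ)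
    (f : ℝ → ℝ) (hf : ∀ x ∈ Set.Ioo (-1 : ℝ) 1,
      f x = a + b * x + ∫ t in Set.Icc (-1 : ℝ) 1, x ^ 2 / (1 + t * x) ∂μ)
    (M : ℝ) (hM : 0 < M) (hbd : ∀ x ∈ Set.Ioo (-1 : ℝ) 1, |f x| ≤ M) :
    (μ (Set.Icc (-1 : ℝ) 1)).toReal ≤ 2 * M ∧ |b| ≤ 6 * M :=
  kraus_integral_mass_and_linear_bound_general μ a b f hf M hbd
end
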